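/- If a ⊙-live node u (with respect to P) weakly ⊙-dominates a branching node of the transition tree T of P, then u is itself a branching node of T. -/

import Mathlib

/-- Non-empty regular expressions over alphabet `α`, identified with their parse trees. -/
inductive RE (α : Type) : Type where
  | eps : RE α
  | ch : α → RE α
  | cat : RE α → RE α → RE α
  | alt : RE α → RE α → RE α
  | star : RE α → RE α

/-- Child directions in the parse tree (a `star`-node only has an `L` child). -/
inductive Dir : Type where
  | L : Dir
  | R : Dir
  deriving DecidableEq

/-- A node of the parse tree is identified with the path from the root to it. -/
abbrev TreePath : Type := List Dir

namespace RE

variable {α : Type}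

/-- The subexpression of `R` rooted at the node reached by following path `v`
(`none` if no such node exists). -/
def sub : RE α → TreePath → Option (RE α)
  | r, [] => some r
  | .cat r _, .L :: p => sub r p
  | .cat _ s, .R :: p => sub s p
  | .alt r _, .L :: p => sub r p
  | .alt _ s, .R :: p => sub s p
  | .star r, .L :: p => sub r p
  | _, _ => none

/-- `v` is a node of the parse tree of `R`. -/
def IsNode (R : RE α) (v : TreePath) : Prop := ∃ r, R.sub v = some r

/-- The label of a position (character leaf); `none` if `p` is not a position. -/
def labelOf (R : RE α) (p : TreePath) : Option α :=
  match R.sub p with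
  | some (.ch a) => some a
  | _ => none

/-- `p` is a position of `R`, i.e. a leaf labeled by a character. -/
def IsPos (R : RE α) (p : TreePath) : Prop := ∃ a, R.labelOf p = some a

/-- `v` is a `⊙`-node (concatenation node). -/
def IsCatNode (R : RE α) (v : TreePath) : Prop := ∃ r s, R.sub v = some (.cat r s)

/-- `v` is a `∗`-node (Kleene-star node). -/
def IsStarNode (R : RE α) (v : TreePath) : Prop := ∃ r, R.sub v = some (.star r)

/-- `PosSeq r w` holds when `w` is a sequence of (paths to) positions of `r`
whose labels spell some string of `L(r)`. -/
inductive PosSeq : RE α → List TreePath → Prop where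
  | eps : PosSeq .eps []
  | ch (a : α) : PosSeq (.ch a) [[]]
  | cat {r s : RE α} {u v : List TreePath} : PosSeq r u → PosSeq s v →
      PosSeq (.cat r s) (u.map (Dir.L :: ·) ++ v.map (Dir.R :: ·))
  | altL {r s : RE α} {u : List TreePath} : PosSeq r u → PosSeq (.alt r s) (u.map (Dir.L :: ·))
  | altR {r s : RE α} {v : List TreePath} : PosSeq s v → PosSeq (.alt r s) (v.map (Dir.R :: ·))
  | starNil {r : RE α} : PosSeq (.star r) []
  | starCons {r : RE α} {u w : List TreePath} : PosSeq r u → PosSeq (.star r) w →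
      PosSeq (.star r) (u.map (Dir.L :: ·) ++ w)

/-- `first(v)`: the positions (as paths in `R`) that occur first in a position
sequence of the subexpression rooted at `v`. -/
def firstSet (R : RE α) (v : TreePath) : Set TreePath :=
  {p | ∃ r, R.sub v = some r ∧ ∃ p' w, PosSeq r (p' :: w) ∧ p = v ++ p'}

/-- `last(v)`: the positions (as paths in `R`) that occur last in a position
sequence of the subexpression rooted at `v`. -/
def lastSet (R : RE α) (v : TreePath) : Set TreePath :=
  {p | ∃ r, R.sub v = some r ∧ ∃ w p', PosSeq r (w ++ [p']) ∧ p = v ++ p'}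

/-- `follow(R,p)`: the positions that can follow `p` in a position sequence of `R`. -/
def followSet (R : RE α) (p : TreePath) : Set TreePath :=
  {q | ∃ w₁ w₂, PosSeq R (w₁ ++ p :: q :: w₂)}

/-- `firstextent(p) = {v : p ∈ first(v)}`. -/
def firstExtent (R : RE α) (p : TreePath) : Set TreePath := {v | p ∈ R.firstSet v}

/-- `lastextent(p) = {v : p ∈ last(v)}`. -/
def lastExtent (R : RE α) (p : TreePath) : Set TreePath := {v | p ∈ R.lastSet v}

/-- `firstextent(P)` for a set of positions `P`. -/
def firstExtentSet (R : RE α) (P : Set TreePath) : Set TreePath := ⋃ p ∈ P, R.firstExtent p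

/-- `lastextent(P)` for a set of positions `P`. -/
def lastExtentSet (R : RE α) (P : Set TreePath) : Set TreePath := ⋃ p ∈ P, R.lastExtent p

end RE

/-- Lowest common ancestor of two nodes = longest common prefix of the paths. -/
def lcaP : TreePath → TreePath → TreePath
  | a :: p, b :: q => if a = b then a :: lcaP p q else []
  | _, _ => []

namespace RE

variable {α : Type}

/-- `u = parent*(v)`: `u` is the lowest ancestor of `v` (possibly `v` itself)
that is a `∗`-node. -/
def IsLowestStarAnc (R : RE α) (v u : TreePath) : Prop :=
  u <+: v ∧ R.IsStarNode u ∧ ∀ w, w <+: v → R.IsStarNode w → w <+: u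

/-- `δ(p,α)`: the `α`-transitions of the position automaton out of position `p`. -/
def delta (R : RE α) (p : TreePath) (a : α) : Set TreePath :=
  {q | R.labelOf q = some a ∧ q ∈ R.followSet p}

/-- `δ(P,α) = ∪_{p ∈ P} δ(p,α)`. -/
def deltaSet (R : RE α) (P : Set TreePath) (a : α) : Set TreePath := ⋃ p ∈ P, R.delta p a

/-- Internal `⊙`-transition: `δ⊙(v,α) = {q ∈ Pos_α : right(v) ∈ firstextent(q)}`. -/
def deltaOdot (R : RE α) (v : TreePath) (a : α) : Set TreePath :=
  {q | R.labelOf q = some a ∧ q ∈ R.firstSet (v ++ [Dir.R])}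

/-- Internal `∗`-transition: `δ∗(v,α) = {q ∈ Pos_α : parent*(v) ∈ firstextent(q)}`. -/
def deltaStar (R : RE α) (v : TreePath) (a : α) : Set TreePath :=
  {q | R.labelOf q = some a ∧ ∃ u, R.IsLowestStarAnc v u ∧ q ∈ R.firstSet u}

/-- `N⊙(P,α)`: the `⊙`-transition nodes. -/
def NOdot (R : RE α) (P : Set TreePath) (a : α) : Set TreePath :=
  {v | R.IsCatNode v ∧ (v ++ [Dir.L]) ∈ R.lastExtentSet P ∧
    (∃ q, R.labelOf q = some a ∧ q ∈ R.firstSet (v ++ [Dir.R]))}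

/-- `N∗(P,α)`: the `∗`-transition nodes. -/
def NStar (R : RE α) (P : Set TreePath) (a : α) : Set TreePath :=
  {u | R.IsStarNode u ∧
    (∃ p ∈ P, ∃ q, R.labelOf q = some a ∧ R.IsLowestStarAnc (lcaP p q) u) ∧
    (∃ p ∈ P, p ∈ R.lastSet u) ∧ (∃ q, R.labelOf q = some a ∧ q ∈ R.firstSet u)}

/-- `u` `∗`-dominates `v`: `u` is a proper ancestor of `v` and `first(v) ⊆ first(u)`. -/
def StarDom (R : RE α) (u v : TreePath) : Prop :=
  u <+: v ∧ u ≠ v ∧ R.firstSet v ⊆ R.firstSet u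

/-- `u` `⊙`-dominates `v`: `u` is a proper ancestor of `v` and
`first(right(v)) ⊆ first(right(u))`. -/
def OdotDom (R : RE α) (u v : TreePath) : Prop :=
  u <+: v ∧ u ≠ v ∧ R.firstSet (v ++ [Dir.R]) ⊆ R.firstSet (u ++ [Dir.R])

/-- `Ñ⊙(P,α)`: the relevant `⊙`-transition nodes. -/
def RelNOdot (R : RE α) (P : Set TreePath) (a : α) : Set TreePath :=
  {v ∈ R.NOdot P a | ∀ u ∈ R.NOdot P a, ¬ R.OdotDom u v}

/-- `Ñ∗(P,α)`: the relevant `∗`-transition nodes. -/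
def RelNStar (R : RE α) (P : Set TreePath) (a : α) : Set TreePath :=
  {v ∈ R.NStar P a | ∀ u ∈ R.NStar P a, ¬ R.StarDom u v}

/-- `v` is a node of the transition tree `T` of `P`: an ancestor of some position of `P`. -/
def InT (R : RE α) (P : Set TreePath) (v : TreePath) : Prop := ∃ p ∈ P, v <+: p

/-- `v` is a branching node of the transition tree of `P`: both children are in `T`. -/
def Branching (R : RE α) (P : Set TreePath) (v : TreePath) : Prop :=
  R.InT P (v ++ [Dir.L]) ∧ R.InT P (v ++ [Dir.R])

/-- `v` is a leaf of the transition tree of `P`. -/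
def LeafT (R : RE α) (P : Set TreePath) (v : TreePath) : Prop :=
  R.InT P v ∧ ∀ d : Dir, ¬ R.InT P (v ++ [d])

/-- `v` is a `⊙`-live node: a `⊙`-node with `left(v) ∈ lastextent(P)`. -/
def OdotLive (R : RE α) (P : Set TreePath) (v : TreePath) : Prop :=
  R.IsCatNode v ∧ (v ++ [Dir.L]) ∈ R.lastExtentSet P

/-- `v` is weakly `⊙`-dominated by `u`: `u` is `⊙`-live, a proper ancestor of `v`,
and `first(v) ⊆ first(right(u))`. -/
def WeakOdotDom (R : RE α) (P : Set TreePath) (u v : TreePath) : Prop :=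
  R.OdotLive P u ∧ u <+: v ∧ u ≠ v ∧ R.firstSet v ⊆ R.firstSet (u ++ [Dir.R])

/-- The pair `(t, b)` delimits a segment of the transition tree of `P`: a path from a
leaf or branching node `b` up to the nearest branching node `t` strictly above it
(or to the root if there is none). -/
def IsSegment (R : RE α) (P : Set TreePath) (t b : TreePath) : Prop :=
  R.InT P b ∧ t <+: b ∧ t ≠ b ∧
  (R.LeafT P b ∨ R.Branching P b) ∧
  (R.Branching P t ∨ t = []) ∧
  (∀ w, t <+: w → w <+: b → w ≠ t → w ≠ b → ¬ R.Branching P w)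

/-- The language `L(R)`. -/
def lang : RE α → Set (List α)
  | .eps => {[]}
  | .ch a => {[a]}
  | .cat r s => {w | ∃ u ∈ lang r, ∃ v ∈ lang s, w = u ++ v}
  | .alt r s => lang r ∪ lang s
  | .star r => {w | ∃ l : List (List α), (∀ u ∈ l, u ∈ lang r) ∧ w = l.flatten}

/-- The position automaton (Glushkov automaton) of `R`: states are the positions of `R`
plus a start state `none`; for `q ∈ first(R)` there is a transition `(p₀, q, label(q))`,
and for `q ∈ follow(R,p)` a transition `(p, q, label(q))`; accepting states are
`last(R)`, together with `p₀` if `ε ∈ L(R)`. -/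
def posNFA (R : RE α) : NFA α (Option TreePath) where
  step := fun s a =>
    {t | ∃ q : TreePath, t = some q ∧ R.labelOf q = some a ∧
      ((s = none ∧ q ∈ R.firstSet []) ∨ (∃ p, s = some p ∧ q ∈ R.followSet p))}
  start := {none}
  accept := {t | (∃ p, t = some p ∧ p ∈ R.lastSet []) ∨ (t = none ∧ [] ∈ R.lang)}

end RE

/-!
The left child of a `⊙`-live node `u` lies in `lastextent(P)`, hence above a position of `P`.
The branching node `v` lies strictly below `u`. Below `right(u)`, it takes `right(u)` into `T`
with it. Below `left(u)` it cannot be: `v` lies above a position, so `first(v)` is nonempty,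
and its elements would be positions below `left(u)` lying in `first(right(u))`.
-/

namespace RE

variable {α : Type}

theorem sub_append (r : RE α) (x y : TreePath) :
    r.sub (x ++ y) = (r.sub x).bind (·.sub y) := by
  induction x generalizing r with
  | nil => simp [sub]
  | cons d x ih => cases r <;> cases d <;> simp [sub, ih]

theorem sub_eq_ch_of_labelOf_eq_some {R : RE α} {p : TreePath} {a : α}
    (h : R.labelOf p = some a) : R.sub p = some (.ch a) := by
  unfold labelOf at h
  split at h <;> simp_all

theorem exists_posSeq (r : RE α) : ∃ w, PosSeq r w := by
  induction r with
  | eps => exact ⟨[], .eps⟩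
  | ch a => exact ⟨_, .ch a⟩
  | cat r s ihr ihs =>
    obtain ⟨u, hu⟩ := ihr
    obtain ⟨w, hw⟩ := ihs
    exact ⟨_, .cat hu hw⟩
  | alt r s ihr _ =>
    obtain ⟨u, hu⟩ := ihr
    exact ⟨_, .altL hu⟩
  | star r _ => exact ⟨[], .starNil⟩

theorem exists_posSeq_ne_nil_of_sub_eq_ch {r : RE α} {q : TreePath} {a : α}
    (h : r.sub q = some (.ch a)) : ∃ w, PosSeq r w ∧ w ≠ [] := by
  induction q generalizing r with
  | nil =>
    simp only [sub, Option.some.injEq] at h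
    subst h
    exact ⟨_, .ch a, List.cons_ne_nil _ _⟩
  | cons d q ih =>
    cases r <;> cases d <;> simp only [sub, reduceCtorEq] at h <;>
      obtain ⟨w, hw, hne⟩ := ih h
    case cat.L s =>
      obtain ⟨w', hw'⟩ := exists_posSeq s
      exact ⟨_, .cat hw hw', by simp [hne]⟩
    case cat.R r _ =>
      obtain ⟨w', hw'⟩ := exists_posSeq r
      exact ⟨_, .cat hw' hw, by simp [hne]⟩
    case alt.L => exact ⟨_, .altL hw, by simp [hne]⟩
    case alt.R => exact ⟨_, .altR hw, by simp [hne]⟩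
    case star.L => exact ⟨_, .starCons hw .starNil, by simp [hne]⟩

theorem firstSet_nonempty_of_prefix_of_isPos {R : RE α} {v p : TreePath}
    (hp : R.IsPos p) (hvp : v <+: p) : (R.firstSet v).Nonempty := by
  obtain ⟨a, ha⟩ := hp
  obtain ⟨t, rfl⟩ := hvp
  have hsub := sub_eq_ch_of_labelOf_eq_some ha
  rw [sub_append] at hsub
  obtain ⟨r, hr, hrt⟩ := Option.bind_eq_some_iff.mp hsub
  obtain ⟨_ | ⟨q, w⟩, hw, hne⟩ := exists_posSeq_ne_nil_of_sub_eq_ch hrt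
  · exact absurd rfl hne
  · exact ⟨v ++ q, r, hr, q, w, hw, rfl⟩

theorem prefix_of_mem_firstSet {R : RE α} {v p : TreePath} (h : p ∈ R.firstSet v) :
    v <+: p := by
  obtain ⟨_, _, p', _, _, rfl⟩ := h
  exact List.prefix_append v p'

theorem prefix_of_mem_lastSet {R : RE α} {v p : TreePath} (h : p ∈ R.lastSet v) :
    v <+: p := by
  obtain ⟨_, _, _, p', _, rfl⟩ := h
  exact List.prefix_append v p'

theorem InT.of_prefix {R : RE α} {P : Set TreePath} {v w : TreePath}
    (hw : R.InT P w) (hvw : v <+: w) : R.InT P v :=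
  let ⟨p, hpP, hwp⟩ := hw
  ⟨p, hpP, hvw.trans hwp⟩

theorem InT.of_mem_lastExtentSet {R : RE α} {P : Set TreePath} {v : TreePath}
    (hv : v ∈ R.lastExtentSet P) : R.InT P v := by
  simp only [lastExtentSet, Set.mem_iUnion] at hv
  obtain ⟨p, hpP, hvp⟩ := hv
  exact ⟨p, hpP, prefix_of_mem_lastSet hvp⟩

end RE

theorem List.not_prefix_of_prefix_append_singleton {α : Type*} {u x : List α} {a b : α}
    (hab : a ≠ b) (ha : u ++ [a] <+: x) : ¬ u ++ [b] <+: x := fun hb =>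
  hab <| by simpa using (List.prefix_of_prefix_length_le ha hb (by simp)).eq_of_length (by simp)

/-- If a `⊙`-live node `u` (w.r.t. `P`) weakly `⊙`-dominates a branching node `v` of
the transition tree `T` of `P`, then `u` is itself a branching node of `T`. -/
theorem weakly_dominating_is_branching {α : Type} (R : RE α) (P : Set TreePath)
    (hP : ∀ p ∈ P, R.IsPos p) (u v : TreePath)
    (hdom : R.WeakOdotDom P u v) (hv : R.Branching P v) :
    R.Branching P u := by
  obtain ⟨⟨-, hlast⟩, ⟨t, rfl⟩, hne, hfirst⟩ := hdom
  have hvT : R.InT P (u ++ t) := hv.1.of_prefix (List.prefix_append _ _)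
  refine ⟨.of_mem_lastExtentSet hlast, ?_⟩
  match t, hne with
  | [], hne => exact absurd (List.append_nil u).symm hne
  | .R :: t, _ => exact hvT.of_prefix ⟨t, by simp⟩
  | .L :: t, _ =>
    obtain ⟨p, hpP, hvp⟩ := hvT
    obtain ⟨q, hq⟩ := RE.firstSet_nonempty_of_prefix_of_isPos (hP p hpP) hvp
    have hLq : u ++ [.L] <+: q :=
      List.IsPrefix.trans ⟨t, by simp⟩ (RE.prefix_of_mem_firstSet hq)
    exact absurd (RE.prefix_of_mem_firstSet (hfirst hq))
      (List.not_prefix_of_prefix_append_singleton (by decide) hLq)
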